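/- arXiv:2010.06431 — 6 statements merged into one kernel-verified Lean document; each statement's English description precedes it below -/
import Mathlib

section
/- Let d ≥ 1 and let G be a locally finite simple graph on a vertex set V that is bipartite and d-regular. Then G has a perfect matching. -/
/-!
Double counting the edges leaving a finite vertex set `s` shows that a `d`-regular graph with
`d ≥ 1` satisfies Hall's condition `|s| ≤ |N(s)|`; Hall's theorem for locally finite bipartite
graphs, infinite ones included, then yields a perfect matching.
-/

namespace SimpleGraph

variable {V : Type*} {G : SimpleGraph V} [G.LocallyFinite] {d : ℕ}

theorem IsRegularOfDegree.card_le_card_biUnion_neighborFinset [DecidableEq V]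
    [DecidableRel G.Adj] (hreg : G.IsRegularOfDegree d) (hd : 0 < d) (s : Finset V) :
    s.card ≤ (s.biUnion (G.neighborFinset ·)).card := by
  refine Nat.le_of_mul_le_mul_right (Finset.card_mul_le_card_mul G.Adj ?_ ?_) hd
  · intro v hv
    have hN : (s.biUnion (G.neighborFinset ·)).bipartiteAbove G.Adj v = G.neighborFinset v := by
      ext w
      simp only [Finset.bipartiteAbove, Finset.mem_filter, Finset.mem_biUnion, mem_neighborFinset]
      exact ⟨And.right, fun hvw => ⟨⟨v, hv, hvw⟩, hvw⟩⟩
    rw [hN, card_neighborFinset_eq_degree, hreg v]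
  · intro w _
    calc (s.bipartiteBelow G.Adj w).card ≤ (G.neighborFinset w).card :=
          Finset.card_le_card fun v hv => by
            rw [Finset.mem_bipartiteBelow] at hv
            exact (G.mem_neighborFinset w v).mpr hv.2.symm
      _ = d := by rw [card_neighborFinset_eq_degree, hreg w]

/-- An infinite `s` has `s.ncard = 0`, so only finite `s` matter. -/
theorem IsRegularOfDegree.ncard_le_ncard_iUnion_neighborSet (hreg : G.IsRegularOfDegree d)
    (hd : 0 < d) (s : Set V) : s.ncard ≤ (⋃ v ∈ s, G.neighborSet v).ncard := by
  classical
  obtain hs | hs := s.finite_or_infinite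
  · lift s to Finset V using hs
    have hN : ⋃ v ∈ (s : Set V), G.neighborSet v = ↑(s.biUnion (G.neighborFinset ·)) := by
      simp [Finset.coe_biUnion, coe_neighborFinset]
    rw [hN, Set.ncard_coe_finset, Set.ncard_coe_finset]
    exact hreg.card_le_card_biUnion_neighborFinset hd s
  · simp [hs.ncard]

end SimpleGraph

open SimpleGraph in
/-- Every locally finite bipartite `d`-regular simple graph (`d ≥ 1`)
has a perfect matching. -/
theorem bipartite_regular_has_perfect_matching {V : Type*} (G : SimpleGraph V)
    [G.LocallyFinite] (d : ℕ) (hd : 1 ≤ d) (hbip : G.Colorable 2)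
    (hreg : G.IsRegularOfDegree d) :
    ∃ M : G.Subgraph, M.IsPerfectMatching := by
  obtain ⟨s, t, hst⟩ := IsBipartite.exists_isBipartiteWith hbip
  exact exists_isPerfectMatching_of_forall_ncard_le hst (hreg.ncard_le_ncard_iUnion_neighborSet hd)
end

section
/- Let G be a simple graph with nonempty vertex set. The canonical double cover G ⊗ K₂ is connected if and only if G is connected and G is not bipartite. -/
/-!
A walk in `G ⊗ K₂` projects to a walk in `G` of the same length, and its `Bool` coordinate
flips at every step; conversely every walk of `G` lifts from either sheet. Hence `(v, b)` and
`(w, c)` are joined in the cover exactly when some walk from `v` to `w` has length of parity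
`b ≠ c`. In particular the two points over a vertex are joined iff `G` has an odd closed walk,
i.e. iff `G` is not bipartite; if moreover `G` is connected, every point of the cover reaches
one of these two points, so the cover is connected.
-/

/-- The canonical double cover `G ⊗ K₂` of a simple graph `G`: vertices are `V × Bool`,
and `(v, b)` is adjacent to `(w, c)` iff `v` is adjacent to `w` in `G` and `b ≠ c`. -/
def doubleCover {V : Type*} (G : SimpleGraph V) : SimpleGraph (V × Bool) where
  Adj x y := G.Adj x.1 y.1 ∧ x.2 ≠ y.2
  symm := ⟨fun _ _ h => ⟨G.adj_symm h.1, Ne.symm h.2⟩⟩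
  loopless := ⟨fun _ h => h.2 rfl⟩

namespace doubleCover

open SimpleGraph

variable {V : Type*} {G : SimpleGraph V}

variable (G) in
@[simps]
def fstHom : doubleCover G →g G where
  toFun := Prod.fst
  map_rel' h := h.1

variable (G) in
def sndColoring : (doubleCover G).Coloring Bool :=
  Coloring.mk Prod.snd fun h => h.2

theorem reachable_of_walk {v w : V} {b c : Bool} (p : G.Walk v w)
    (hbc : Even p.length ↔ b = c) : (doubleCover G).Reachable (v, b) (w, c) := by
  induction p generalizing b with
  | nil => rw [hbc.1 (by simp)]
  | cons h q ih =>
    have hq : Even q.length ↔ (!b) = c := by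
      rw [Walk.length_cons, Nat.even_add_one] at hbc
      cases b <;> cases c <;> simp_all
    exact Adj.reachable (G := doubleCover G) ⟨h, by simp⟩ |>.trans (ih hq)

theorem exists_reachable_of_reachable {v w : V} (h : G.Reachable v w) (b : Bool) :
    ∃ c, (doubleCover G).Reachable (v, b) (w, c) := by
  obtain ⟨p⟩ := h
  by_cases hp : Even p.length
  · exact ⟨b, reachable_of_walk (c := b) p (by simp [hp])⟩
  · exact ⟨!b, reachable_of_walk (c := !b) p (by simp [hp])⟩

theorem reachable_iff {v w : V} {b c : Bool} :
    (doubleCover G).Reachable (v, b) (w, c) ↔ ∃ p : G.Walk v w, (Even p.length ↔ b = c) := by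
  refine ⟨fun ⟨q⟩ => ⟨(q.map (fstHom G)).copy (fstHom_apply ..) (fstHom_apply ..), ?_⟩,
    fun ⟨p, hp⟩ => reachable_of_walk p hp⟩
  rw [Walk.length_copy, Walk.length_map, (sndColoring G).even_length_iff_congr q]
  exact Bool.coe_iff_coe

end doubleCover

open SimpleGraph doubleCover in
/-- For a simple graph `G` with nonempty vertex set, the canonical double
cover `G ⊗ K₂` is connected iff `G` is connected and `G` is not bipartite. -/
theorem doubleCover_connected_iff {V : Type*} [Nonempty V] (G : SimpleGraph V) :
    (doubleCover G).Connected ↔ G.Connected ∧ ¬ G.Colorable 2 := by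
  rw [two_colorable_iff_forall_loop_even]
  constructor
  · intro h
    refine ⟨⟨fun v w => (h.preconnected (v, false) (w, false)).map (fstHom G)⟩, fun hcol => ?_⟩
    obtain ⟨v⟩ := ‹Nonempty V›
    obtain ⟨p, hp⟩ := reachable_iff.1 (h.preconnected (v, false) (v, true))
    simpa using hp.1 (hcol v p)
  · rintro ⟨hG, hcol⟩
    obtain ⟨u, p, hp⟩ : ∃ u, ∃ p : G.Walk u u, Odd p.length := by
      simpa only [not_forall, Nat.not_even_iff_odd] using hcol
    have sheets_joined (b c : Bool) : (doubleCover G).Reachable (u, b) (u, c) := by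
      by_cases hbc : b = c
      · rw [hbc]
      · exact reachable_of_walk p (by simpa [hbc, Nat.not_even_iff_odd] using hp)
    have reaches_sheet (x : V × Bool) : ∃ c, (doubleCover G).Reachable x (u, c) :=
      exists_reachable_of_reachable (hG.preconnected x.1 u) x.2
    refine Connected.mk fun x y => ?_
    obtain ⟨c, hx⟩ := reaches_sheet x
    obtain ⟨c', hy⟩ := reaches_sheet y
    exact hx.trans ((sheets_joined c c').trans hy.symm)
end

section
/- Let G be a connected locally finite d-regular simple graph on vertex set V, with d ≥ 1. Then either G admits a Schreier structure, or the canonical double cover G ⊗ K₂ admits a Schreier structure on its vertex set V × Bool. (Equivalently: G is isomorphic to a Schreier graph, or G has a double cover which is isomorphic to a Schreier graph.) -/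
/-- A Schreier structure on a simple graph `G` with vertex set `V`: a group `Γ` acting
transitively on `V` (the action being given by the homomorphism `act : Γ →* Equiv.Perm V`),
together with a finite symmetric subset `S ⊆ Γ` with `1 ∉ S`, such that for every vertex `x`
the map `s ↦ s • x` is a bijection from `S` onto the neighborhood of `x` in `G`. -/
structure SchreierStructure {V : Type*} (G : SimpleGraph V) where
  Γ : Type*
  [grp : Group Γ]
  act : Γ →* Equiv.Perm V
  S : Finset Γ
  symm : ∀ s ∈ S, s⁻¹ ∈ S
  one_not_mem : (1 : Γ) ∉ S
  transitive : ∀ x y : V, ∃ g : Γ, act g x = y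
  bijOn : ∀ x : V, Set.BijOn (fun s : Γ => act s x) (S : Set Γ) (G.neighborSet x)

/-!
The canonical double cover of a `d`-regular graph is a `d`-regular bipartite graph, so by
Kőnig's theorem (Hall's theorem on each side, glued by Schröder–Bernstein in the locally finite
infinite case) its edges split into `d` perfect matchings. Equivalently there are permutations
`σ₁, …, σ_d` of `V` such that `i ↦ σᵢ v` enumerates the neighbours of each `v`. Each `σᵢ` yields
the involution `(v, 0) ↦ (σᵢ v, 1)`, `(v, 1) ↦ (σᵢ⁻¹ v, 0)` of `V × Bool`; these involutions
form `S` inside the full (transitive) permutation group of `V × Bool`. Since a connected locally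
finite graph is countable, this group can be shrunk into any universe.
-/

open Function Finset

universe u v w

section RegularBipartite

variable {α β : Type*} {A : α → Finset β} {B : β → Finset α} {d : ℕ}

theorem exists_injective_forall_mem_of_card_le (hd : 0 < d)
    (hAB : ∀ a b, b ∈ A a ↔ a ∈ B b) (hA : ∀ a, d ≤ #(A a)) (hB : ∀ b, #(B b) ≤ d) :
    ∃ f : α → β, Injective f ∧ ∀ a, f a ∈ A a := by
  classical
  refine (all_card_le_biUnion_card_iff_exists_injective A).1 fun s => ?_
  have hedges : #s * d ≤ #(s.biUnion A) * d :=
    card_mul_le_card_mul (fun a b => b ∈ A a)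
      (fun a ha => (hA a).trans <| card_le_card fun b hb =>
        (mem_bipartiteAbove _).2 ⟨mem_biUnion.2 ⟨a, ha, hb⟩, hb⟩)
      (fun b _ => (card_le_card fun a ha => (hAB a b).1 ((mem_bipartiteBelow _).1 ha).2).trans
        (hB b))
  exact Nat.le_of_mul_le_mul_right hedges hd

theorem exists_equiv_forall_mem_of_card_eq (hd : 0 < d)
    (hAB : ∀ a b, b ∈ A a ↔ a ∈ B b) (hA : ∀ a, #(A a) = d) (hB : ∀ b, #(B b) = d) :
    ∃ e : α ≃ β, ∀ a, e a ∈ A a := by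
  obtain ⟨f, hf, hfA⟩ := exists_injective_forall_mem_of_card_le hd hAB
    (fun a => (hA a).ge) (fun b => (hB b).le)
  obtain ⟨g, hg, hgB⟩ := exists_injective_forall_mem_of_card_le hd (fun b a => (hAB a b).symm)
    (fun b => (hB b).ge) (fun a => (hA a).le)
  obtain ⟨h, hbij, hhA⟩ := Embedding.schroeder_bernstein_of_rel hf hg (fun a b => b ∈ A a) hfA
    fun b => (hAB _ b).2 (hgB b)
  exact ⟨Equiv.ofBijective h hbij, hhA⟩

theorem exists_equiv_decomposition_of_card_eq
    (hAB : ∀ a b, b ∈ A a ↔ a ∈ B b) (hA : ∀ a, #(A a) = d) (hB : ∀ b, #(B b) = d) :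
    ∃ e : Fin d → α ≃ β, ∀ a, (∀ i, e i a ∈ A a) ∧ Injective fun i => e i a := by
  classical
  induction d generalizing A B with
  | zero => exact ⟨finZeroElim, fun a => ⟨finZeroElim, injective_of_subsingleton _⟩⟩
  | succ d ih =>
    obtain ⟨e, he⟩ := exists_equiv_forall_mem_of_card_eq d.succ_pos hAB hA hB
    have heB (b : β) : e.symm b ∈ B b := (hAB _ b).1 (by simpa using he (e.symm b))
    have hAB' (a : α) (b : β) : b ∈ (A a).erase (e a) ↔ a ∈ (B b).erase (e.symm b) := by
      rw [mem_erase, mem_erase, hAB, ne_eq, ne_eq, e.eq_symm_apply, eq_comm]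
    obtain ⟨e', he'⟩ := ih hAB'
      (fun a => by rw [card_erase_of_mem (he a), hA, Nat.add_sub_cancel])
      (fun b => by rw [card_erase_of_mem (heB b), hB, Nat.add_sub_cancel])
    refine ⟨Fin.cons e e', fun a => ⟨Fin.forall_fin_succ.2 ⟨by simpa using he a,
      fun i => by simpa using (mem_erase.1 ((he' a).1 i)).2⟩, ?_⟩⟩
    change Injective ((· a) ∘ Fin.cons e e')
    rw [Fin.comp_cons, Fin.cons_injective_iff]
    exact ⟨fun ⟨i, hi⟩ => (mem_erase.1 ((he' a).1 i)).1 hi, (he' a).2⟩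

end RegularBipartite

namespace SimpleGraph

variable {V : Type*} {G : SimpleGraph V} {d : ℕ}

theorem bijOn_neighborSet_symm {σ : Fin d → Equiv.Perm V}
    (hσ : ∀ v, Set.BijOn (fun i => σ i v) Set.univ (G.neighborSet v)) (v : V) :
    Set.BijOn (fun i => (σ i).symm v) Set.univ (G.neighborSet v) := by
  refine ⟨fun i _ => ?_, fun i _ j _ hij => ?_, fun w hw => ?_⟩
  · simpa using G.adj_symm ((hσ ((σ i).symm v)).mapsTo (Set.mem_univ i))
  · replace hij : (σ i).symm v = (σ j).symm v := hij
    refine (hσ ((σ i).symm v)).injOn trivial trivial ?_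
    nth_rewrite 2 [hij]
    simp
  · obtain ⟨i, -, hi⟩ := (hσ w).surjOn (G.adj_symm hw)
    exact ⟨i, trivial, by simp [← hi]⟩

variable [G.LocallyFinite]

theorem Connected.countable (hconn : G.Connected) : Countable V := by
  obtain ⟨v₀⟩ := hconn.nonempty
  let ball : ℕ → Set V := fun n => Nat.rec {v₀} (fun _ s => s ∪ ⋃ v ∈ s, G.neighborSet v) n
  have hball (n : ℕ) : (ball n).Countable := by
    induction n with
    | zero => exact Set.countable_singleton v₀
    | succ n ih => exact ih.union (ih.biUnion fun v _ => (G.neighborSet v).toFinite.countable)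
  have hcover (w : V) : ∃ n, w ∈ ball n := by
    induction (reachable_iff_reflTransGen v₀ w).1 (hconn v₀ w) with
    | refl => exact ⟨0, rfl⟩
    | tail _ hadj ih =>
      obtain ⟨n, hn⟩ := ih
      exact ⟨n + 1, Or.inr (Set.mem_biUnion hn hadj)⟩
  exact Set.countable_univ_iff.1
    ((Set.countable_iUnion hball).mono fun w _ => Set.mem_iUnion.2 (hcover w))

theorem IsRegularOfDegree.exists_perm_decomposition (hreg : G.IsRegularOfDegree d) :
    ∃ σ : Fin d → Equiv.Perm V, ∀ v, (∀ i, G.Adj v (σ i v)) ∧ Injective fun i => σ i v := by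
  have hsymm (v w : V) : w ∈ G.neighborFinset v ↔ v ∈ G.neighborFinset w := by
    rw [mem_neighborFinset, mem_neighborFinset, adj_comm]
  obtain ⟨σ, hσ⟩ := exists_equiv_decomposition_of_card_eq hsymm hreg hreg
  exact ⟨σ, fun v => ⟨fun i => (G.mem_neighborFinset _ _).1 ((hσ v).1 i), (hσ v).2⟩⟩

theorem bijOn_neighborSet_of_injective {v : V} (hv : G.degree v = d) {f : Fin d → V}
    (hadj : ∀ i, G.Adj v (f i)) (hf : Injective f) :
    Set.BijOn f Set.univ (G.neighborSet v) := by
  classical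
  have himage : univ.image f = G.neighborFinset v :=
    eq_of_subset_of_card_le
      (fun w hw => by
        obtain ⟨i, -, rfl⟩ := mem_image.1 hw
        exact (G.mem_neighborFinset _ _).2 (hadj i))
      (by rw [card_image_of_injective _ hf, card_neighborFinset_eq_degree, hv, card_fin])
  refine ⟨fun i _ => hadj i, hf.injOn, fun w hw => ?_⟩
  obtain ⟨i, -, hi⟩ := mem_image.1 (himage ▸ (G.mem_neighborFinset v w).2 hw)
  exact ⟨i, trivial, hi⟩

end SimpleGraph

section DoubleCover

variable {V : Type*} {G : SimpleGraph V}

theorem doubleCover_neighborSet (v : V) (b : Bool) :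
    (doubleCover G).neighborSet (v, b) = (fun w => (w, !b)) '' G.neighborSet v := by
  ext ⟨w, c⟩
  cases b <;> cases c <;> simp [doubleCover]

theorem bijOn_doubleCover_neighborSet {ι : Type*} {v : V} {f : ι → V}
    (hf : Set.BijOn f Set.univ (G.neighborSet v)) (b : Bool) :
    Set.BijOn (fun i => (f i, !b)) Set.univ ((doubleCover G).neighborSet (v, b)) := by
  rw [doubleCover_neighborSet]
  exact (Prod.mk_left_injective (!b)).injOn.bijOn_image.comp hf

def doubleCoverInvolution (σ : Equiv.Perm V) : Equiv.Perm (V × Bool) :=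
  Involutive.toPerm (fun x => (cond x.2 (σ.symm x.1) (σ x.1), !x.2)) <| by
    rintro ⟨v, _ | _⟩ <;> simp

theorem doubleCoverInvolution_apply (σ : Equiv.Perm V) (v : V) (b : Bool) :
    doubleCoverInvolution σ (v, b) = (cond b (σ.symm v) (σ v), !b) := rfl

theorem doubleCoverInvolution_inv (σ : Equiv.Perm V) :
    (doubleCoverInvolution σ)⁻¹ = doubleCoverInvolution σ := rfl

end DoubleCover

namespace SchreierStructure

attribute [instance] SchreierStructure.grp

variable {W : Type u} {G : SimpleGraph W}

def ofMulEquiv (P : SchreierStructure G) {Γ' : Type*} [Group Γ'] (e : Γ' ≃* P.Γ) :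
    SchreierStructure G where
  Γ := Γ'
  act := P.act.comp e.toMonoidHom
  S := P.S.map e.symm.toEquiv.toEmbedding
  symm s hs := by
    obtain ⟨t, ht, rfl⟩ := mem_map.1 hs
    exact mem_map.2 ⟨t⁻¹, P.symm t ht, by simp⟩
  one_not_mem h := by
    obtain ⟨t, ht, ht1⟩ := mem_map.1 h
    rw [show t = 1 by simpa using congrArg e ht1] at ht
    exact P.one_not_mem ht
  transitive x y := by
    obtain ⟨g, hg⟩ := P.transitive x y
    exact ⟨e.symm g, by simpa using hg⟩
  bijOn x := by
    rw [coe_map]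
    refine (Set.bijOn_comp_iff e.symm.injective.injOn).1 ?_
    simpa [Function.comp_def] using P.bijOn x

theorem nonempty_of_small (P : SchreierStructure.{u, v} G) [hΓ : Small.{w} P.Γ] :
    Nonempty (SchreierStructure.{u, w} G) :=
  ⟨P.ofMulEquiv Shrink.mulEquiv⟩

end SchreierStructure

instance small_perm {W : Type*} [Small.{w} W] : Small.{w} (Equiv.Perm W) :=
  small_of_injective DFunLike.coe_injective

open Classical in
noncomputable def doubleCoverSchreierStructure {V : Type*} [Nonempty V] {G : SimpleGraph V}
    {d : ℕ} (σ : Fin d → Equiv.Perm V)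
    (hσ : ∀ v, Set.BijOn (fun i => σ i v) Set.univ (G.neighborSet v)) :
    SchreierStructure (doubleCover G) where
  Γ := Equiv.Perm (V × Bool)
  act := MonoidHom.id _
  S := univ.image fun i => doubleCoverInvolution (σ i)
  symm s hs := by
    obtain ⟨i, -, rfl⟩ := mem_image.1 hs
    rwa [doubleCoverInvolution_inv]
  one_not_mem h := by
    obtain ⟨i, -, hi⟩ := mem_image.1 h
    obtain ⟨v⟩ := ‹Nonempty V›
    simpa [doubleCoverInvolution_apply] using congrArg (fun τ => (τ (v, false)).2) hi
  transitive x y := ⟨Equiv.swap x y, Equiv.swap_apply_left x y⟩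
  bijOn := by
    rintro ⟨v, b⟩
    have hb : Set.BijOn (fun i => doubleCoverInvolution (σ i) (v, b)) Set.univ
        ((doubleCover G).neighborSet (v, b)) := by
      cases b
      · exact bijOn_doubleCover_neighborSet (hσ v) false
      · exact bijOn_doubleCover_neighborSet (SimpleGraph.bijOn_neighborSet_symm hσ v) true
    rw [coe_image, coe_univ]
    exact (Set.bijOn_comp_iff
      (hb.injOn.of_comp (g := fun τ : Equiv.Perm (V × Bool) => τ (v, b)))).1 hb

theorem schreier_or_doubleCover_schreier_general {V : Type*} (G : SimpleGraph V)
    [G.LocallyFinite] (d : ℕ) (hconn : G.Connected)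
    (hreg : G.IsRegularOfDegree d) :
    Nonempty (SchreierStructure G) ∨ Nonempty (SchreierStructure (doubleCover G)) := by
  have : Nonempty V := hconn.nonempty
  have : Countable V := hconn.countable
  obtain ⟨σ, hσ⟩ := hreg.exists_perm_decomposition
  have hbij (v : V) : Set.BijOn (fun i => σ i v) Set.univ (G.neighborSet v) :=
    SimpleGraph.bijOn_neighborSet_of_injective (hreg v) (hσ v).1 (hσ v).2
  exact Or.inr <| (doubleCoverSchreierStructure σ hbij).nonempty_of_small (hΓ := small_perm)

/-- Every connected locally finite `d`-regular simple graph (`d ≥ 1`) either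
admits a Schreier structure, or its canonical double cover does.  (Equivalently: `G` is
isomorphic to a Schreier graph, or `G` has a double cover isomorphic to a Schreier graph.) -/
theorem schreier_or_doubleCover_schreier {V : Type*} (G : SimpleGraph V)
    [G.LocallyFinite] (d : ℕ) (hd : 1 ≤ d) (hconn : G.Connected)
    (hreg : G.IsRegularOfDegree d) :
    Nonempty (SchreierStructure G) ∨ Nonempty (SchreierStructure (doubleCover G)) :=
  schreier_or_doubleCover_schreier_general G d hconn hreg
end

section
/- Let d ≥ 0, n ≥ 1, and let G be a connected locally finite (2d+n)-regular simple graph on vertex set V. Then G admits n pairwise orthogonal perfect matchings if and only if there exist permutations σ₁, …, σ_d of V and fixed-point-free involutions τ₁, …, τ_n of V such that for every vertex x the 2d+n vertices σ₁(x), σ₁⁻¹(x), …, σ_d(x), σ_d⁻¹(x), τ₁(x), …, τ_n(x) are pairwise distinct and their set is exactly the neighborhood of x in G. (Equivalently: G is isomorphic to a Schreier graph of F_d ∗ (ℤ/2ℤ)^{∗n}, where F_d is the free group of rank d, if and only if G has n pairwise orthogonal perfect matchings.) -/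
/-!
Perfect matchings `M₁, …, Mₙ` with pairwise disjoint edge sets are the same as involutions
`τ₁, …, τₙ` with `x ~ τⱼ x` and the `τⱼ x` pairwise distinct. Deleting their edges leaves a
`2d`-regular graph `H`, so it remains to write the neighbourhoods of `H` as
`σ₁^{±1} x, …, σ_d^{±1} x`. Matching the edges of `H` bijectively with `V × Fin d` so that each edge
goes to one of its endpoints orients `H` with all in- and out-degrees `d`; the `d`-regular bipartite
relation "`x → y`" then splits into `d` bijections by peeling off perfect matchings. In this locally
finite, possibly infinite, setting a perfect matching of a `k`-regular bipartite graph (`k > 0`)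
comes from Hall's theorem on each side together with Schröder–Bernstein.
-/


open Finset Function

namespace Finset

variable {α β : Type*} {s : α → Finset β} {t : β → Finset α} {k : ℕ}

theorem card_le_card_biUnion_of_card_le [DecidableEq β] (hst : ∀ a b, a ∈ t b ↔ b ∈ s a)
    (hk : 0 < k) (hs : ∀ a, #(s a) = k) (ht : ∀ b, #(t b) ≤ k) (u : Finset α) :
    #u ≤ #(u.biUnion s) := by
  refine Nat.le_of_mul_le_mul_right (card_mul_le_card_mul (fun a b => b ∈ s a) ?_ ?_) hk
  · intro a ha
    rw [← hs a]
    refine card_le_card fun b hb => (mem_bipartiteAbove _).2 ⟨mem_biUnion.2 ⟨a, ha, hb⟩, hb⟩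
  · intro b _
    exact (card_le_card fun a ha => (hst a b).2 ((mem_bipartiteBelow _).1 ha).2).trans (ht b)

theorem exists_equiv_forall_mem_of_card_eq (hst : ∀ a b, a ∈ t b ↔ b ∈ s a) (hk : 0 < k)
    (hs : ∀ a, #(s a) = k) (ht : ∀ b, #(t b) = k) : ∃ e : α ≃ β, ∀ a, e a ∈ s a := by
  classical
  obtain ⟨f, hf, hfs⟩ := (all_card_le_biUnion_card_iff_exists_injective s).1
    (card_le_card_biUnion_of_card_le hst hk hs fun b => (ht b).le)
  obtain ⟨g, hg, hgt⟩ := (all_card_le_biUnion_card_iff_exists_injective t).1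
    (card_le_card_biUnion_of_card_le (fun b a => (hst a b).symm) hk ht fun a => (hs a).le)
  obtain ⟨e, he, hes⟩ := Embedding.schroeder_bernstein_of_rel hf hg (fun a b => b ∈ s a) hfs
    fun b => (hst _ b).1 (hgt b)
  exact ⟨Equiv.ofBijective e he, hes⟩

theorem exists_equivs_of_card_eq (hst : ∀ a b, a ∈ t b ↔ b ∈ s a) (hs : ∀ a, #(s a) = k)
    (ht : ∀ b, #(t b) = k) :
    ∃ π : Fin k → α ≃ β, (∀ a, Injective (π · a)) ∧ ∀ a b, b ∈ s a ↔ ∃ i, π i a = b := by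
  classical
  induction k generalizing s t with
  | zero =>
    refine ⟨Fin.elim0, fun a i => i.elim0, fun a b => ?_⟩
    simp [card_eq_zero.1 (hs a)]
  | succ k ih =>
    obtain ⟨e, he⟩ := exists_equiv_forall_mem_of_card_eq hst k.succ_pos hs ht
    have hte : ∀ b, e.symm b ∈ t b := fun b => (hst _ b).2 (by simpa using he (e.symm b))
    obtain ⟨π, hπ, hπs⟩ :=
      ih (s := fun a => (s a).erase (e a)) (t := fun b => (t b).erase (e.symm b))
      (fun a b => by simp only [mem_erase, hst, ne_eq, Equiv.eq_symm_apply, @eq_comm _ (e a)])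
      (fun a => by simp [he, hs]) (fun b => by simp [hte, ht])
    refine ⟨Fin.cons e π, fun a => ?_, fun a b => ?_⟩
    · have : (fun i => (Fin.cons e π : Fin (k + 1) → α ≃ β) i a) = Fin.cons (e a) (π · a) := by
        funext i; cases i using Fin.cases <;> rfl
      rw [this, Fin.cons_injective_iff]
      exact ⟨fun ⟨i, hi⟩ => ((mem_erase.1 ((hπs a _).2 ⟨i, hi⟩)).1 rfl), hπ a⟩
    · rw [Fin.exists_fin_succ]
      simp only [Fin.cons_zero, Fin.cons_succ, ← hπs, mem_erase]
      by_cases hb : b = e a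
      · simp [hb, he]
      · simp [hb, Ne.symm hb]

end Finset

namespace SimpleGraph

variable {V : Type*} {G : SimpleGraph V}

namespace Subgraph

theorem IsPerfectMatching.exists_involutive {M : G.Subgraph} (hM : M.IsPerfectMatching) :
    ∃ τ : V → V, Involutive τ ∧ ∀ x y, M.Adj x y ↔ τ x = y :=
  let ⟨τ, hτ, hMτ⟩ := (@Std.Symm.forall_existsUnique_iff _ _ M.symm).1
    (isPerfectMatching_iff.1 hM)
  ⟨τ, hτ, fun _ _ => hMτ⟩

def ofInvolutive (τ : V → V) (hτ : Involutive τ) (hG : ∀ x, G.Adj x (τ x)) : G.Subgraph where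
  verts := Set.univ
  Adj x y := τ x = y
  adj_sub := by rintro x _ rfl; exact hG x
  edge_vert _ := trivial
  symm := ⟨by rintro x _ rfl; exact hτ x⟩

theorem isPerfectMatching_ofInvolutive (τ : V → V) (hτ : Involutive τ)
    (hG : ∀ x, G.Adj x (τ x)) : (ofInvolutive τ hτ hG).IsPerfectMatching :=
  isPerfectMatching_iff.2 fun _ => existsUnique_eq'

theorem disjoint_edgeSet_iff_of_adj_iff {M M' : G.Subgraph} {f f' : V → V}
    (hM : ∀ x y, M.Adj x y ↔ f x = y) (hM' : ∀ x y, M'.Adj x y ↔ f' x = y) :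
    Disjoint M.edgeSet M'.edgeSet ↔ ∀ x, f x ≠ f' x := by
  rw [Set.disjoint_left]
  constructor
  · intro h x hx
    exact h (Subgraph.mem_edgeSet.2 ((hM x _).2 rfl))
      (Subgraph.mem_edgeSet.2 ((hM' x _).2 hx.symm))
  · intro h e he he'
    induction e using Sym2.ind with
    | h x y =>
      rw [Subgraph.mem_edgeSet, hM] at he
      rw [Subgraph.mem_edgeSet, hM'] at he'
      exact h x (he.trans he'.symm)

end Subgraph

open Subgraph in
theorem exists_disjoint_perfectMatchings_iff {ι : Type*} :
    (∃ M : ι → G.Subgraph, (∀ i, (M i).IsPerfectMatching) ∧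
        ∀ i j, i ≠ j → Disjoint (M i).edgeSet (M j).edgeSet) ↔
      ∃ τ : ι → V → V, (∀ i, Involutive (τ i)) ∧ (∀ i x, G.Adj x (τ i x)) ∧
        ∀ x, Injective (τ · x) := by
  constructor
  · rintro ⟨M, hM, hdisj⟩
    choose τ hτ hMτ using fun i => (hM i).exists_involutive
    refine ⟨τ, hτ, fun i x => (M i).adj_sub ((hMτ i x _).2 rfl), fun x i j hij => ?_⟩
    by_contra hne
    exact (disjoint_edgeSet_iff_of_adj_iff (hMτ i) (hMτ j)).1 (hdisj i j hne) x hij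
  · rintro ⟨τ, hτ, hG, hinj⟩
    refine ⟨fun i => ofInvolutive (τ i) (hτ i) (hG i),
      fun i => isPerfectMatching_ofInvolutive _ _ _, fun i j hij => ?_⟩
    exact (disjoint_edgeSet_iff_of_adj_iff (fun _ _ => Iff.rfl) (fun _ _ => Iff.rfl)).2
      fun x h => hij (hinj x h)

section LocallyFinite

variable [G.LocallyFinite] {d : ℕ}

theorem IsRegularOfDegree.exists_equiv_edgeSet_prod_fin (hreg : G.IsRegularOfDegree (2 * d)) :
    ∃ e : G.edgeSet ≃ V × Fin d, ∀ ε : G.edgeSet, (e ε).1 ∈ (ε : Sym2 V) := by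
  classical
  rcases Nat.eq_zero_or_pos d with rfl | hd
  · have : IsEmpty G.edgeSet := ⟨fun ⟨ε, hε⟩ => by
      induction ε using Sym2.ind with
      | h x y => exact ((G.degree_pos_iff_exists_adj x).2 ⟨y, hε⟩).ne' (hreg x)⟩
    exact ⟨Equiv.equivOfIsEmpty _ _, isEmptyElim⟩
  obtain ⟨e, he⟩ := exists_equiv_forall_mem_of_card_eq (k := 2 * d)
    (s := fun ε : G.edgeSet => ε.1.toFinset ×ˢ (univ : Finset (Fin d)))
    (t := fun p => (G.incidenceFinset p.1).subtype (· ∈ G.edgeSet))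
    (fun ε p => by simp [incidenceSet, Sym2.mem_toFinset, ε.2]) (by omega)
    (fun ε => by
      rw [card_product, Sym2.card_toFinset_of_not_isDiag _ (G.not_isDiag_of_mem_edgeSet ε.2),
        card_univ, Fintype.card_fin])
    (fun p => by
      rw [card_subtype, filter_true_of_mem fun ε hε => ((G.mem_incidenceFinset _ _).1 hε).1,
        card_incidenceFinset_eq_degree, hreg])
  exact ⟨e, fun ε => Sym2.mem_toFinset.1 (mem_product.1 (he ε)).1⟩

theorem IsRegularOfDegree.exists_balanced_orientation (hreg : G.IsRegularOfDegree (2 * d)) :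
    ∃ inNbrs : V → Finset V, (∀ y, #(inNbrs y) = d) ∧
      (∀ x y, G.Adj x y ↔ x ∈ inNbrs y ∨ y ∈ inNbrs x) ∧
      ∀ x y, x ∈ inNbrs y → y ∉ inNbrs x := by
  classical
  obtain ⟨e, head_mem⟩ := hreg.exists_equiv_edgeSet_prod_fin
  -- Orient each edge `ε` towards `(e ε).1`: the edges pointing to `y` are the `e.symm (y, k)`.
  choose tail htail using fun p : V × Fin d =>
    Sym2.mem_iff_exists.1 (by simpa using head_mem (e.symm p))
  set inNbrs : V → Finset V := fun y => univ.image fun k => tail (y, k)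
  have mem_iff : ∀ x y, x ∈ inNbrs y ↔ ∃ ε : G.edgeSet, ε.1 = s(x, y) ∧ (e ε).1 = y := by
    intro x y
    simp only [inNbrs, mem_image, mem_univ, true_and]
    constructor
    · rintro ⟨k, rfl⟩
      exact ⟨e.symm (y, k), (htail _).trans Sym2.eq_swap, by simp⟩
    · rintro ⟨ε, hε, hεy⟩
      refine ⟨(e ε).2, (Sym2.congr_right (a := y)).1 ((htail (y, _)).symm.trans ?_)⟩
      have : e.symm (y, (e ε).2) = ε := by rw [← hεy, Prod.mk.eta, e.symm_apply_apply]
      rw [this, hε, Sym2.eq_swap]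
  refine ⟨inNbrs, fun y => ?_, fun x y => ?_, fun x y => ?_⟩
  · rw [card_image_of_injective _ fun k k' hkk' => ?_, card_univ, Fintype.card_fin]
    have := e.symm.injective (Subtype.ext ((htail (y, k)).trans (hkk' ▸ (htail (y, k')).symm)))
    exact (Prod.ext_iff.1 this).2
  · simp only [mem_iff]
    constructor
    · intro hxy
      rcases Sym2.mem_iff.1 (head_mem ⟨s(x, y), hxy⟩) with h | h
      · exact Or.inr ⟨⟨s(x, y), hxy⟩, Sym2.eq_swap, h⟩
      · exact Or.inl ⟨⟨s(x, y), hxy⟩, rfl, h⟩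
    · rintro (⟨ε, hε, -⟩ | ⟨ε, hε, -⟩)
      · exact G.mem_edgeSet.1 (hε ▸ ε.2)
      · exact (G.mem_edgeSet.1 (hε ▸ ε.2)).symm
  · simp only [mem_iff]
    rintro ⟨ε, hε, hεy⟩ ⟨ε', hε', hε'x⟩
    have hεε' : ε = ε' := Subtype.ext (hε.trans (hε'.trans Sym2.eq_swap).symm)
    have hxy : G.Adj x y := G.mem_edgeSet.1 (hε ▸ ε.2)
    exact hxy.ne (hε'x ▸ hεε' ▸ hεy)

theorem IsRegularOfDegree.exists_perms_range_eq_neighborSet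
    (hreg : G.IsRegularOfDegree (2 * d)) :
    ∃ σ : Fin d → Equiv.Perm V, ∀ x,
      Injective (Sum.elim (fun i => σ i x) (fun i => (σ i)⁻¹ x)) ∧
      Set.range (Sum.elim (fun i => σ i x) (fun i => (σ i)⁻¹ x)) = G.neighborSet x := by
  classical
  obtain ⟨inNbrs, hcard, hadj, hasymm⟩ := hreg.exists_balanced_orientation
  set outNbrs := fun x => G.neighborFinset x \ inNbrs x
  have hsub : ∀ x, inNbrs x ⊆ G.neighborFinset x := fun x y hy =>
    (G.mem_neighborFinset _ _).2 ((hadj x y).2 (Or.inr hy))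
  have hmem : ∀ x y, x ∈ inNbrs y ↔ y ∈ outNbrs x := by
    intro x y
    simp only [outNbrs, mem_sdiff, mem_neighborFinset, hadj]
    exact ⟨fun h => ⟨Or.inl h, hasymm x y h⟩, fun ⟨h, hn⟩ => h.resolve_right hn⟩
  have hout : ∀ x, #(outNbrs x) = d := fun x => by
    simp only [outNbrs, card_sdiff_of_subset (hsub x), card_neighborFinset_eq_degree, hreg x,
      hcard]
    omega
  obtain ⟨σ, hσinj, hσ⟩ := exists_equivs_of_card_eq hmem hout hcard
  have hσinv : ∀ x y, y ∈ inNbrs x ↔ ∃ i, (σ i)⁻¹ x = y := by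
    intro x y
    rw [hmem, hσ]
    exact exists_congr fun i => by rw [Equiv.Perm.inv_eq_iff_eq, eq_comm]
  refine ⟨σ, fun x => ⟨Sum.elim_injective.2 ⟨hσinj x, fun i j hij => ?_, fun i j hij => ?_⟩, ?_⟩⟩
  · have hij : (σ i)⁻¹ x = (σ j)⁻¹ x := hij
    have hi : σ i ((σ i)⁻¹ x) = x := by simp
    have hj : σ j ((σ i)⁻¹ x) = x := by rw [hij]; simp
    exact hσinj _ (hi.trans hj.symm)
  · exact (mem_sdiff.1 ((hσ x _).2 ⟨i, rfl⟩)).2 (hij ▸ (hσinv x _).2 ⟨j, rfl⟩)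
  · ext y
    simp only [Set.Sum.elim_range, Set.mem_union, Set.mem_range, ← hσ, ← hσinv, outNbrs,
      mem_sdiff, mem_neighborSet, ← mem_neighborFinset]
    exact ⟨fun h => h.elim And.left (hsub x ·), fun h => (em _).imp (⟨h, ·⟩) not_not.1⟩

theorem IsRegularOfDegree.exists_perms_of_involutive {n : ℕ}
    (hreg : G.IsRegularOfDegree (2 * d + n)) {τ : Fin n → V → V} (hτ : ∀ j, Involutive (τ j))
    (hG : ∀ j x, G.Adj x (τ j x)) (hinj : ∀ x, Injective (τ · x)) :
    ∃ σ : Fin d → Equiv.Perm V, ∀ x,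
      Injective (Sum.elim (Sum.elim (fun i => σ i x) (fun i => (σ i)⁻¹ x)) (fun j => τ j x)) ∧
      Set.range (Sum.elim (Sum.elim (fun i => σ i x) (fun i => (σ i)⁻¹ x)) (fun j => τ j x)) =
        G.neighborSet x := by
  classical
  let H : SimpleGraph V := G.deleteEdges (⋃ j, Set.range fun x => s(x, τ j x))
  have hH : ∀ x y, H.Adj x y ↔ G.Adj x y ∧ ∀ j, τ j x ≠ y := by
    intro x y
    have hmem : ∀ j, (∃ z, s(z, τ j z) = s(x, y)) ↔ τ j x = y := fun j =>
      ⟨fun ⟨z, hz⟩ => by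
        rcases Sym2.eq_iff.1 hz with ⟨rfl, rfl⟩ | ⟨rfl, rfl⟩
        exacts [rfl, hτ j _], fun h => ⟨x, h ▸ rfl⟩⟩
    simp only [H, deleteEdges_adj, Set.mem_iUnion, Set.mem_range, hmem, not_exists, ne_eq]
  have : H.LocallyFinite := fun x =>
    ((G.neighborSet x).toFinite.subset fun y hy => ((hH x y).1 hy).1).fintype
  have hHreg : H.IsRegularOfDegree (2 * d) := fun x => by
    have hnbr : H.neighborFinset x = G.neighborFinset x \ univ.image (τ · x) := by
      ext y
      simp [hH]
    have hsub : univ.image (τ · x) ⊆ G.neighborFinset x := by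
      simp [subset_iff, hG]
    rw [← card_neighborFinset_eq_degree, hnbr, card_sdiff_of_subset hsub,
      card_neighborFinset_eq_degree, hreg x, card_image_of_injective _ (hinj x), card_univ,
      Fintype.card_fin, Nat.add_sub_cancel]
  obtain ⟨σ, hσ⟩ := hHreg.exists_perms_range_eq_neighborSet
  refine ⟨σ, fun x => ⟨Sum.elim_injective.2 ⟨(hσ x).1, hinj x, fun a j h => ?_⟩, ?_⟩⟩
  · have : _ ∈ H.neighborSet x := (hσ x).2 ▸ Set.mem_range_self a
    exact ((hH x _).1 this).2 j h.symm
  · rw [Set.Sum.elim_range, (hσ x).2]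
    ext y
    simp only [Set.mem_union, mem_neighborSet, hH, Set.mem_range]
    exact ⟨fun h => h.elim And.left fun ⟨j, hj⟩ => hj ▸ hG j x,
      fun h => or_iff_not_imp_right.2 fun hne => ⟨h, fun j hj => hne ⟨j, hj⟩⟩⟩

end LocallyFinite

end SimpleGraph

theorem orthogonal_matchings_iff_schreier_of_free_product_general {V : Type*} (G : SimpleGraph V)
    [G.LocallyFinite] (d n : ℕ)
    (hreg : G.IsRegularOfDegree (2 * d + n)) :
    (∃ M : Fin n → G.Subgraph,
        (∀ i, (M i).IsPerfectMatching) ∧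
        ∀ i j, i ≠ j → Disjoint (M i).edgeSet (M j).edgeSet) ↔
    (∃ (σ : Fin d → Equiv.Perm V) (τ : Fin n → Equiv.Perm V),
        (∀ j, ∀ x, τ j (τ j x) = x) ∧
        (∀ j, ∀ x, τ j x ≠ x) ∧
        ∀ x : V,
          Function.Injective
            (Sum.elim (Sum.elim (fun i : Fin d => σ i x) (fun i : Fin d => (σ i)⁻¹ x))
              (fun j : Fin n => τ j x)) ∧
          Set.range
            (Sum.elim (Sum.elim (fun i : Fin d => σ i x) (fun i : Fin d => (σ i)⁻¹ x))
              (fun j : Fin n => τ j x)) = G.neighborSet x) := by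
  rw [SimpleGraph.exists_disjoint_perfectMatchings_iff]
  constructor
  · rintro ⟨τ, hτ, hG, hinj⟩
    obtain ⟨σ, hσ⟩ := hreg.exists_perms_of_involutive hτ hG hinj
    exact ⟨σ, fun j => (hτ j).toPerm, hτ, fun j x => (hG j x).ne', hσ⟩
  · rintro ⟨σ, τ, hτ, -, hσ⟩
    refine ⟨fun j => τ j, hτ, fun j x => ?_, fun x => (hσ x).1.comp Sum.inr_injective⟩
    rw [← SimpleGraph.mem_neighborSet, ← (hσ x).2]
    exact Set.mem_range_self (Sum.inr j)

/-- Let `G` be a connected locally finite `(2d+n)`-regular simple graph,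
`n ≥ 1`.  Then `G` admits `n` pairwise orthogonal perfect matchings iff there are permutations
`σ₁, …, σ_d` of `V` and fixed-point-free involutions `τ₁, …, τ_n` of `V` such that for every
vertex `x` the `2d+n` vertices `σ₁ x, σ₁⁻¹ x, …, σ_d x, σ_d⁻¹ x, τ₁ x, …, τ_n x` are pairwise
distinct and their set is exactly the neighborhood of `x`.  (Equivalently: `G` is isomorphic
to a Schreier graph of `F_d ∗ (ℤ/2ℤ)^{∗n}` iff it has `n` pairwise orthogonal perfect
matchings.) -/
theorem orthogonal_matchings_iff_schreier_of_free_product {V : Type*} (G : SimpleGraph V)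
    [G.LocallyFinite] (d n : ℕ) (hn : 1 ≤ n) (hconn : G.Connected)
    (hreg : G.IsRegularOfDegree (2 * d + n)) :
    (∃ M : Fin n → G.Subgraph,
        (∀ i, (M i).IsPerfectMatching) ∧
        ∀ i j, i ≠ j → Disjoint (M i).edgeSet (M j).edgeSet) ↔
    (∃ (σ : Fin d → Equiv.Perm V) (τ : Fin n → Equiv.Perm V),
        (∀ j, ∀ x, τ j (τ j x) = x) ∧
        (∀ j, ∀ x, τ j x ≠ x) ∧
        ∀ x : V,
          Function.Injective
            (Sum.elim (Sum.elim (fun i : Fin d => σ i x) (fun i : Fin d => (σ i)⁻¹ x))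
              (fun j : Fin n => τ j x)) ∧
          Set.range
            (Sum.elim (Sum.elim (fun i : Fin d => σ i x) (fun i : Fin d => (σ i)⁻¹ x))
              (fun j : Fin n => τ j x)) = G.neighborSet x) :=
  orthogonal_matchings_iff_schreier_of_free_product_general G d n hreg
end

section
/- There exists a finite connected 3-regular simple graph that has no perfect matching (and hence is not isomorphic to a Schreier graph). -/
/-!
Take three copies of the five-vertex gadget "`K₄` minus an edge, plus a vertex joined to the two
ends of the missing edge" and join the three degree-two vertices to a common hub. Every vertex then
has degree three. Each gadget has an odd number of vertices and is attached to the rest by a single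
edge into the hub, so a perfect matching would have to match the hub into each of the three
gadgets at once.
-/

namespace SimpleGraph

variable {V : Type*} {G : SimpleGraph V}

theorem reachable_of_iterate_eq {f : V → V} {r : V} (hf : ∀ v, v ≠ r → G.Adj v (f v)) :
    ∀ (n : ℕ) (v : V), f^[n] v = r → G.Reachable v r
  | 0, _, h => h ▸ Reachable.refl _
  | n + 1, v, h => by
    by_cases hv : v = r
    · exact hv ▸ Reachable.refl _
    · exact (hf v hv).reachable.trans (reachable_of_iterate_eq hf n (f v) h)

namespace Subgraph

theorem IsPerfectMatching.exists_adj_of_odd_card {M : G.Subgraph}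
    (hM : M.IsPerfectMatching) {S : Finset V} (hS : Odd S.card) :
    ∃ v ∈ S, ∃ w ∉ S, M.Adj v w := by
  by_contra! hclosed
  have hmatch : (M.induce S).IsMatching := by
    intro v hv
    obtain ⟨w, hvw, huniq⟩ := hM.1 (hM.2 v)
    exact ⟨w, ⟨hv, hclosed v hv w |>.mtr hvw, hvw⟩, fun y hy => huniq y hy.2.2⟩
  have : Fintype (M.induce S).verts := inferInstanceAs (Fintype (S : Set V))
  have heven : Even (M.induce S).verts.toFinset.card := hmatch.even_card
  simp only [induce_verts, Finset.coe_sort_coe, Set.toFinset_card, Fintype.card_coe] at heven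
  exact Nat.not_even_iff_odd.2 hS heven

theorem IsPerfectMatching.adj_of_odd_card_of_unique_exit {M : G.Subgraph}
    (hM : M.IsPerfectMatching) {S : Finset V} (hS : Odd S.card) {c x : V}
    (hexit : ∀ v ∈ S, ∀ w ∉ S, G.Adj v w → v = c ∧ w = x) : M.Adj c x := by
  obtain ⟨v, hv, w, hw, hvw⟩ := hM.exists_adj_of_odd_card hS
  obtain ⟨rfl, rfl⟩ := hexit v hv w hw (M.adj_sub hvw)
  exact hvw

end Subgraph

end SimpleGraph

open SimpleGraph

/-- The gadgets are `{0,…,4}`, `{5,…,9}`, `{10,…,14}`, attached through `4`, `9`, `14` to the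
hub `15`. -/
def cubicGraphEdges : List (Fin 16 × Fin 16) :=
  [(0,2),(0,3),(0,4),(1,2),(1,3),(1,4),(2,3),(4,15),
   (5,7),(5,8),(5,9),(6,7),(6,8),(6,9),(7,8),(9,15),
   (10,12),(10,13),(10,14),(11,12),(11,13),(11,14),(12,13),(14,15)]

def cubicGraphNoPerfectMatching : SimpleGraph (Fin 16) :=
  SimpleGraph.fromRel fun a b => (a, b) ∈ cubicGraphEdges

instance : DecidableRel cubicGraphNoPerfectMatching.Adj :=
  inferInstanceAs (DecidableRel (SimpleGraph.fromRel _).Adj)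

theorem cubicGraphNoPerfectMatching_connected : cubicGraphNoPerfectMatching.Connected := by
  have hparent : ∀ v : Fin 16, v ≠ 15 →
      cubicGraphNoPerfectMatching.Adj v (![4,4,0,0,15,9,9,5,5,15,14,14,10,10,15,15] v) := by
    decide
  refine (connected_iff_exists_forall_reachable _).2 ⟨15, fun v => ?_⟩
  exact (reachable_of_iterate_eq hparent 3 v (by revert v; decide)).symm

theorem cubicGraphNoPerfectMatching_isRegularOfDegree :
    cubicGraphNoPerfectMatching.IsRegularOfDegree 3 := by
  intro v
  revert v
  decide

/-- There exists a finite connected `3`-regular simple graph with no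
perfect matching (and hence not isomorphic to a Schreier graph). -/
theorem exists_cubic_connected_no_perfect_matching :
    ∃ (n : ℕ) (G : SimpleGraph (Fin n)) (_ : DecidableRel G.Adj),
      G.Connected ∧ G.IsRegularOfDegree 3 ∧
      ¬ ∃ M : G.Subgraph, M.IsPerfectMatching := by
  refine ⟨16, cubicGraphNoPerfectMatching, inferInstance,
    cubicGraphNoPerfectMatching_connected, cubicGraphNoPerfectMatching_isRegularOfDegree, ?_⟩
  rintro ⟨M, hM⟩
  have h4 : M.Adj 4 15 := hM.adj_of_odd_card_of_unique_exit (S := {0,1,2,3,4}) (by decide)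
    (by decide)
  have h9 : M.Adj 9 15 := hM.adj_of_odd_card_of_unique_exit (S := {5,6,7,8,9}) (by decide)
    (by decide)
  exact absurd (hM.1.eq_of_adj_right h4 h9) (by decide)
end

section
/- Let T be a tree (a connected acyclic simple graph), let H be a connected nonempty simple graph, and let φ : H → T be a covering, i.e. a graph homomorphism such that for every vertex v of H, φ restricts to a bijection from the neighborhood of v in H onto the neighborhood of φ(v) in T. Then φ is a bijection on vertices, and hence an isomorphism of graphs. (Consequently, a connected double cover of a tree does not exist: the only double cover of a tree is the disjoint union of two copies of it.) -/
open SimpleGraph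

/-- A walk has no backtracking: no vertex is revisited two steps later. -/
def NoBT {V : Type*} {T : SimpleGraph V} : ∀ {x y : V}, T.Walk x y → Prop
  | _, _, .nil => True
  | _, _, .cons _ .nil => True
  | x, _, .cons _ (.cons (v := c) h' r) => x ≠ c ∧ NoBT (.cons h' r)

lemma noBT_of_cons {V : Type*} {T : SimpleGraph V} {x y z : V} (h : T.Adj x y)
    (q : T.Walk y z) (hq : NoBT (Walk.cons h q)) : NoBT q := by
  cases q with
  | nil => trivial
  | cons h' r => exact hq.2

/-- A non-backtracking walk in an acyclic graph is a path. -/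
lemma isPath_of_noBT {V : Type*} {T : SimpleGraph V} (hT : T.IsAcyclic) :
    ∀ {x y : V} (q : T.Walk x y), NoBT q → q.IsPath := by
  intro x y q
  classical
  induction q with
  | nil => intro _; exact Walk.IsPath.nil
  | @cons x b y h r ih =>
    intro hq
    have hr : r.IsPath := ih (noBT_of_cons h r hq)
    rw [Walk.cons_isPath_iff]
    refine ⟨hr, fun hx => ?_⟩
    -- the prefix of `r` up to `x` is a path from `b` to `x`;
    -- by uniqueness of paths in acyclic graphs it is the single edge `b x`.
    have hr1 : (r.takeUntil x hx).IsPath := hr.takeUntil hx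
    have h1 : (Walk.cons h.symm Walk.nil : T.Walk b x).IsPath := by simp [h.ne']
    have := hT.path_unique ⟨r.takeUntil x hx, hr1⟩ ⟨Walk.cons h.symm Walk.nil, h1⟩
    have heq : r.takeUntil x hx = Walk.cons h.symm Walk.nil := congrArg Subtype.val this
    have hspec := r.take_spec hx
    rw [heq] at hspec
    -- so r = cons h.symm (r.dropUntil x hx)
    rw [Walk.cons_append, Walk.nil_append] at hspec
    have hr2 : r = Walk.cons h.symm (r.dropUntil x hx) := hspec.symm
    rw [hr2] at hq
    exact hq.1 rfl

/-- Images of paths under a covering are non-backtracking. -/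
lemma noBT_map {W V : Type*} {T : SimpleGraph V} {H : SimpleGraph W} (φ : H →g T)
    (hcov : ∀ v : W, Set.BijOn φ (H.neighborSet v) (T.neighborSet (φ v))) :
    ∀ {u w : W} (p : H.Walk u w), p.IsPath → NoBT (p.map φ) := by
  intro u w p
  induction p with
  | nil => intro _; trivial
  | @cons u b w h q ih =>
    intro hp
    have hq : q.IsPath := hp.of_cons
    cases q with
    | nil => trivial
    | @cons b c w h' r =>
      refine ⟨fun hform => ?_, ih hq⟩
      -- φ u = φ c with u, c both neighbors of b
      have hu : u ∈ H.neighborSet b := h.symm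
      have hc : c ∈ H.neighborSet b := h'
      have huc : u = c := (hcov b).injOn hu hc hform
      -- but p is a path, so u ≠ c
      rw [Walk.cons_isPath_iff] at hp
      apply hp.2
      rw [huc, Walk.support_cons]
      exact List.mem_cons_of_mem _ (Walk.start_mem_support r)

/-- Let `T` be a tree, `H` a connected simple graph, and `φ : H →g T` a
graph homomorphism which is a covering, i.e. for every vertex `v` of `H`, `φ` restricts to a
bijection from the neighborhood of `v` in `H` onto the neighborhood of `φ v` in `T`.  Then
`φ` is a bijection on vertices and in fact an isomorphism of graphs.  (Consequently a tree
has no connected double cover.) -/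
theorem covering_of_tree_is_isomorphism {W V : Type*} (T : SimpleGraph V) (H : SimpleGraph W)
    (htree : T.IsTree) (hconn : H.Connected) (φ : H →g T)
    (hcov : ∀ v : W, Set.BijOn φ (H.neighborSet v) (T.neighborSet (φ v))) :
    Function.Bijective φ ∧ ∃ e : H ≃g T, ∀ v : W, e v = φ v := by
  -- Injectivity
  classical
  have hinj : Function.Injective φ := by
    intro u w huw
    obtain ⟨p0⟩ := hconn u w
    have hp : (p0.toPath : H.Walk u w).IsPath := p0.toPath.2
    set p : H.Walk u w := (p0.toPath : H.Walk u w) with hpdef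
    have hq : ((p.map φ).copy rfl huw.symm).IsPath := by
      rw [Walk.isPath_copy]
      exact isPath_of_noBT htree.IsAcyclic _ (noBT_map φ hcov p hp)
    have : ((p.map φ).copy rfl huw.symm : T.Walk (φ u) (φ u)) = Walk.nil :=
      congrArg Subtype.val (SimpleGraph.Path.loop_eq ⟨_, hq⟩)
    have hlen : p.length = 0 := by
      have := congrArg Walk.length this
      simpa using this
    exact Walk.eq_of_length_eq_zero hlen
  -- Surjectivity
  have hsurj : Function.Surjective φ := by
    obtain ⟨w0⟩ := hconn.nonempty
    have key : ∀ {t t' : V} (_ : T.Walk t t') (x : W) (_ : φ x = t), ∃ y : W, φ y = t' := by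
      intro t t' q
      induction q with
      | nil => exact fun x hx => ⟨x, hx⟩
      | @cons t t1 t' h q ih =>
        intro x hx
        have ht1 : t1 ∈ T.neighborSet (φ x) := hx ▸ h
        obtain ⟨x1, hx1, hφx1⟩ := (hcov x).surjOn ht1
        exact ih x1 hφx1
    intro t
    obtain ⟨q⟩ := htree.isConnected.preconnected (φ w0) t
    exact key q w0 rfl
  refine ⟨⟨hinj, hsurj⟩, ?_⟩
  -- Build the isomorphism
  refine ⟨⟨Equiv.ofBijective φ ⟨hinj, hsurj⟩, ?_⟩, fun v => rfl⟩
  intro a b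
  constructor
  · intro hadj
    have hb : φ b ∈ T.neighborSet (φ a) := hadj
    obtain ⟨b', hb', hφb'⟩ := (hcov a).surjOn hb
    rwa [hinj hφb'] at hb'
  · exact fun h => φ.map_adj h
end
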